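/- For every prime number p and every positive integer k, Cond(V_{p^k}) = p^{k−1} · Cond(V_p). -/

import Mathlib

open Matrix Polynomial BigOperators

/-- The Frobenius norm of a square complex matrix. -/
noncomputable def frobNorm {k : ℕ} (A : Matrix (Fin k) (Fin k) ℂ) : ℝ :=
  Real.sqrt (∑ i, ∑ j, ‖A i j‖ ^ 2)

/-- The condition number `Cond(A) = ‖A‖ ‖A⁻¹‖` (Frobenius norm). -/
noncomputable def condNum {k : ℕ} (A : Matrix (Fin k) (Fin k) ℂ) : ℝ :=
  frobNorm A * frobNorm A⁻¹

/-- The Vandermonde matrix with (i,j) entry `ζ i ^ j` (0-indexed). -/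
def vand {m : ℕ} (ζ : Fin m → ℂ) : Matrix (Fin m) (Fin m) ℂ :=
  Matrix.of fun i j => ζ i ^ (j : ℕ)

/-- The radical of `n`: the product of the distinct prime factors of `n`. -/
def rad (n : ℕ) : ℕ := ∏ p ∈ n.primeFactors, p

/-- The Ramanujan sum `c_n(t)`: the sum of the `t`-th powers of the
primitive `n`-th roots of unity in `ℂ`. -/
noncomputable def ram (n : ℕ) (t : ℤ) : ℂ := ∑ z ∈ primitiveRoots n ℂ, z ^ t

open Finset

/-! For `n = p^(k+1)` the Gram matrix `Vᴴ V` of `V = V_n` has entries `c_n(t - s)` (Ramanujan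
sums), and `c_n(d) = n [n ∣ d] - p^k [p^k ∣ d]`; as `0 ≤ s, t < φ(n) < n` this gives
`Vᴴ V = n I - p^k J`, where `J` is the 0/1 matrix of congruence modulo `p^k` on
`{0, …, φ(n) - 1}`. Each class has `p - 1` elements, so `J² = (p - 1) J`, whence
`(Vᴴ V)⁻¹ = (I + J) / n` and `‖V⁻¹‖² = tr (Vᴴ V)⁻¹ = 2 φ(n) / n`, while `‖V‖² = φ(n)²`.
Thus `Cond(V_n) = φ(n) √(2 φ(n) / n)` for every prime power `n`, and the theorem follows from
`φ(p^k) / p^k = φ(p) / p`. -/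

lemma sum_nthRootsFinset_zpow (n : ℕ) [NeZero n] (d : ℤ) :
    ∑ z ∈ nthRootsFinset n (1 : ℂ), z ^ d = if (n : ℤ) ∣ d then (n : ℂ) else 0 := by
  have hn : 0 < n := NeZero.pos n
  obtain ⟨ω, hω⟩ : ∃ ω : ℂ, IsPrimitiveRoot ω n := ⟨_, Complex.isPrimitiveRoot_exp n hn.ne'⟩
  have himage : nthRootsFinset n (1 : ℂ) = (range n).image (ω ^ ·) := by
    ext z
    simp only [mem_nthRootsFinset hn, mem_image, mem_range]
    refine ⟨hω.eq_pow_of_pow_eq_one, ?_⟩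
    rintro ⟨i, -, rfl⟩
    rw [← pow_mul, mul_comm, pow_mul, hω.pow_eq_one, one_pow]
  have hωd : (ω ^ d) ^ n = 1 := by
    rw [← zpow_natCast, ← _root_.zpow_mul, mul_comm, _root_.zpow_mul, zpow_natCast,
      hω.pow_eq_one, _root_.one_zpow]
  rw [himage, sum_image hω.injOn_pow]
  simp_rw [← zpow_natCast, ← _root_.zpow_mul, mul_comm _ d, _root_.zpow_mul, zpow_natCast]
  split_ifs with hd
  · simp [(hω.zpow_eq_one_iff_dvd d).2 hd]
  · rw [geom_sum_eq ((hω.zpow_eq_one_iff_dvd d).not.2 hd), hωd, sub_self, zero_div]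

lemma primitiveRoots_prime_pow_succ {R : Type*} [CommRing R] [IsDomain R] [DecidableEq R]
    {p : ℕ} (hp : p.Prime) (k : ℕ) :
    primitiveRoots (p ^ (k + 1)) R =
      nthRootsFinset (p ^ (k + 1)) (1 : R) \ nthRootsFinset (p ^ k) 1 := by
  have := Fact.mk hp
  ext z
  rw [mem_primitiveRoots (pow_pos hp.pos _), mem_sdiff, mem_nthRootsFinset (pow_pos hp.pos _),
    mem_nthRootsFinset (pow_pos hp.pos _)]
  refine ⟨fun h => ⟨h.pow_eq_one, h.pow_ne_one_of_pos_of_lt (pow_ne_zero _ hp.ne_zero)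
    (Nat.pow_lt_pow_right hp.one_lt k.lt_succ_self)⟩, fun ⟨h1, h2⟩ => ?_⟩
  rw [← orderOf_eq_prime_pow h2 h1]
  exact IsPrimitiveRoot.orderOf z

lemma ram_prime_pow_succ {p : ℕ} (hp : p.Prime) (k : ℕ) (d : ℤ) :
    ram (p ^ (k + 1)) d = (if (p : ℤ) ^ (k + 1) ∣ d then (p : ℂ) ^ (k + 1) else 0) -
      (if (p : ℤ) ^ k ∣ d then (p : ℂ) ^ k else 0) := by
  have : NeZero p := ⟨hp.ne_zero⟩
  have hsub : nthRootsFinset (p ^ k) (1 : ℂ) ⊆ nthRootsFinset (p ^ (k + 1)) 1 := by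
    intro z hz
    rw [mem_nthRootsFinset (pow_pos hp.pos _)] at hz ⊢
    rw [pow_succ, pow_mul, hz, one_pow]
  rw [ram, primitiveRoots_prime_pow_succ hp, sum_sdiff_eq_sub hsub, sum_nthRootsFinset_zpow,
    sum_nthRootsFinset_zpow]
  push_cast
  rfl

lemma sum_comp_eq_sum_primitiveRoots {M : Type*} [AddCommMonoid M] {n : ℕ} [NeZero n]
    {ζ : Fin n.totient → ℂ} (hinj : Function.Injective ζ) (hζ : ∀ i, IsPrimitiveRoot (ζ i) n)
    (f : ℂ → M) : ∑ i, f (ζ i) = ∑ z ∈ primitiveRoots n ℂ, f z := by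
  have himage : univ.image ζ = primitiveRoots n ℂ := by
    refine eq_of_subset_of_card_le (fun z hz => ?_) ?_
    · obtain ⟨i, -, rfl⟩ := mem_image.1 hz
      exact (mem_primitiveRoots (NeZero.pos n)).2 (hζ i)
    · rw [card_image_of_injective _ hinj, card_univ, Fintype.card_fin,
        Complex.card_primitiveRoots]
  rw [← himage, sum_image fun i _ j _ h => hinj h]

lemma sum_norm_sq_eq_trace_mul_conjTranspose {m n : Type*} [Fintype m] [Fintype n]
    (A : Matrix m n ℂ) : ((∑ i, ∑ j, ‖A i j‖ ^ 2 : ℝ) : ℂ) = (A * Aᴴ).trace := by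
  simp only [trace, diag_apply, mul_apply, conjTranspose_apply, Complex.star_def,
    Complex.mul_conj, Complex.normSq_eq_norm_sq]
  push_cast
  rfl

lemma frobNorm_inv {k : ℕ} (A : Matrix (Fin k) (Fin k) ℂ) :
    frobNorm A⁻¹ = √(Aᴴ * A)⁻¹.trace.re := by
  rw [Matrix.mul_inv_rev, ← Matrix.conjTranspose_nonsing_inv,
    ← sum_norm_sq_eq_trace_mul_conjTranspose, Complex.ofReal_re, frobNorm]

lemma frobNorm_vand_of_norm_eq_one {m : ℕ} {ζ : Fin m → ℂ} (hζ : ∀ i, ‖ζ i‖ = 1) :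
    frobNorm (vand ζ) = m := by
  simp [frobNorm, vand, hζ]

lemma conjTranspose_mul_vand_apply {m : ℕ} {ζ : Fin m → ℂ} (hζ : ∀ i, ‖ζ i‖ = 1)
    (s t : Fin m) : ((vand ζ)ᴴ * vand ζ) s t = ∑ i, ζ i ^ ((t : ℤ) - s) := by
  rw [mul_apply]
  refine sum_congr rfl fun i _ => ?_
  have hne : ζ i ≠ 0 := norm_ne_zero_iff.1 (by simp [hζ i])
  rw [conjTranspose_apply, vand, of_apply, of_apply, star_pow,
    Complex.star_def, ← Complex.inv_eq_conj (hζ i), zpow_sub₀ hne, div_eq_inv_mul, inv_pow,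
    zpow_natCast, zpow_natCast]

def modEqMatrix (R : Type*) [Zero R] [One R] (m q : ℕ) : Matrix (Fin m) (Fin m) R :=
  of fun s t => if (s : ℕ) ≡ t [MOD q] then 1 else 0

lemma trace_modEqMatrix (R : Type*) [AddCommMonoidWithOne R] (m q : ℕ) :
    (modEqMatrix R m q).trace = m := by
  simp [modEqMatrix, trace, Nat.ModEq.refl]

lemma modEqMatrix_mul_self (R : Type*) [NonAssocSemiring R] {m q : ℕ} (hq : 0 < q)
    (hqm : q ∣ m) :
    modEqMatrix R m q * modEqMatrix R m q = ((m / q : ℕ) : R) • modEqMatrix R m q := by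
  ext s u
  have hcount : ∑ t : Fin m, (if (t : ℕ) ≡ u [MOD q] then (1 : R) else 0) = (m / q : ℕ) := by
    rw [Fin.sum_univ_eq_sum_range (fun t => if t ≡ u [MOD q] then (1 : R) else 0), sum_boole,
      ← Nat.count_eq_card_filter_range, Nat.count_modEq_card _ hq, Nat.mod_eq_zero_of_dvd hqm]
    simp
  simp only [mul_apply, modEqMatrix, of_apply, Matrix.smul_apply, smul_eq_mul,
    ite_zero_mul_ite_zero, mul_one]
  by_cases hsu : (s : ℕ) ≡ u [MOD q]
  · rw [if_pos hsu, mul_one, ← hcount]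
    exact sum_congr rfl fun t _ => if_congr ⟨And.right, fun h => ⟨hsu.trans h.symm, h⟩⟩ rfl rfl
  · rw [if_neg hsu, mul_zero]
    exact sum_eq_zero fun t _ => if_neg fun h => hsu (h.1.trans h.2)

lemma inv_smul_one_sub_smul {ι K : Type*} [Fintype ι] [DecidableEq ι] [Field K]
    {J : Matrix ι ι K} {a b c : K} (hJ : J * J = c • J) (ha : a ≠ 0) (habc : a = b * (1 + c)) :
    (a • 1 - b • J)⁻¹ = a⁻¹ • (1 + J) := by
  have hmul : (a • 1 - b • J) * (1 + J) = a • 1 := by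
    simp only [sub_mul, mul_add, mul_one, smul_mul_assoc, one_mul, hJ, smul_smul, habc]
    module
  refine inv_eq_right_inv ?_
  rw [mul_smul_comm, hmul, smul_smul, inv_mul_cancel₀ ha, one_smul]

lemma conjTranspose_mul_vand_prime_pow_succ {p k : ℕ} (hp : p.Prime)
    {ζ : Fin (p ^ (k + 1)).totient → ℂ} (hinj : Function.Injective ζ)
    (hζ : ∀ i, IsPrimitiveRoot (ζ i) (p ^ (k + 1))) :
    (vand ζ)ᴴ * vand ζ = (p : ℂ) ^ (k + 1) • 1 - (p : ℂ) ^ k • modEqMatrix ℂ _ (p ^ k) := by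
  have : NeZero p := ⟨hp.ne_zero⟩
  have hnorm : ∀ i, ‖ζ i‖ = 1 := fun i => (hζ i).norm'_eq_one (NeZero.ne _)
  have hlt : (p ^ (k + 1)).totient < p ^ (k + 1) :=
    Nat.totient_lt _ (Nat.one_lt_pow k.succ_ne_zero hp.one_lt)
  ext s t
  rw [conjTranspose_mul_vand_apply hnorm,
    sum_comp_eq_sum_primitiveRoots hinj hζ (· ^ ((t : ℤ) - s)), ← ram, ram_prime_pow_succ hp]
  have hdiag : (p : ℤ) ^ (k + 1) ∣ t - s ↔ s = t := by
    rw [← Nat.cast_pow, ← Nat.modEq_iff_dvd, ← Fin.val_inj]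
    exact ⟨fun h => h.eq_of_lt_of_lt (s.2.trans hlt) (t.2.trans hlt), fun h => h ▸ rfl⟩
  have hmod : (p : ℤ) ^ k ∣ t - s ↔ (s : ℕ) ≡ t [MOD p ^ k] := by
    rw [← Nat.cast_pow, ← Nat.modEq_iff_dvd]
  simp [hdiag, hmod, modEqMatrix, one_apply]

theorem condNum_vand_of_isPrimePow {n : ℕ} (hn : IsPrimePow n) {ζ : Fin n.totient → ℂ}
    (hinj : Function.Injective ζ) (hζ : ∀ i, IsPrimitiveRoot (ζ i) n) :
    condNum (vand ζ) = n.totient * √(2 * n.totient / n) := by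
  obtain ⟨p, k, hp, hk, rfl⟩ := (isPrimePow_nat_iff n).1 hn
  obtain ⟨k, rfl⟩ := Nat.exists_eq_add_one.2 hk
  have hm : (p ^ (k + 1)).totient = p ^ k * (p - 1) := Nat.totient_prime_pow_succ hp k
  have hJ : modEqMatrix ℂ _ (p ^ k) * modEqMatrix ℂ _ (p ^ k) =
      ((p - 1 : ℕ) : ℂ) • modEqMatrix ℂ (p ^ (k + 1)).totient (p ^ k) := by
    rw [modEqMatrix_mul_self ℂ (pow_pos hp.pos _) (hm ▸ dvd_mul_right _ _), hm,
      Nat.mul_div_cancel_left _ (pow_pos hp.pos _)]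
  have hinv :
      ((vand ζ)ᴴ * vand ζ)⁻¹ = ((p : ℂ) ^ (k + 1))⁻¹ • (1 + modEqMatrix ℂ _ (p ^ k)) := by
    rw [conjTranspose_mul_vand_prime_pow_succ hp hinj hζ]
    exact inv_smul_one_sub_smul hJ (by simp [hp.ne_zero])
      (by push_cast [Nat.cast_sub hp.one_le]; ring)
  have htrace : ((vand ζ)ᴴ * vand ζ)⁻¹.trace =
      ((2 * (p ^ (k + 1)).totient / p ^ (k + 1) : ℝ) : ℂ) := by
    rw [hinv, trace_smul, trace_add, trace_one, trace_modEqMatrix, Fintype.card_fin]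
    push_cast
    ring
  have hnorm : ∀ i, ‖ζ i‖ = 1 := fun i => (hζ i).norm'_eq_one (pow_ne_zero _ hp.ne_zero)
  rw [condNum, frobNorm_vand_of_norm_eq_one hnorm, frobNorm_inv, htrace, Complex.ofReal_re]
  push_cast
  rfl

/-- For every prime `p` and every positive integer `k`,
`Cond(V_{p^k}) = p^(k-1) * Cond(V_p)`. -/
theorem cond_vand_prime_pow_eq (p k : ℕ) (hp : p.Prime) (hk : 0 < k)
    (ζ : Fin (p ^ k).totient → ℂ) (hζinj : Function.Injective ζ)
    (hζ : ∀ i, IsPrimitiveRoot (ζ i) (p ^ k))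
    (ξ : Fin p.totient → ℂ) (hξinj : Function.Injective ξ)
    (hξ : ∀ i, IsPrimitiveRoot (ξ i) p) :
    condNum (vand ζ) = ((p : ℝ)) ^ (k - 1) * condNum (vand ξ) := by
  rw [condNum_vand_of_isPrimePow (hp.isPrimePow.pow hk.ne') hζinj hζ,
    condNum_vand_of_isPrimePow hp.isPrimePow hξinj hξ]
  obtain ⟨j, rfl⟩ := Nat.exists_eq_add_one.2 hk
  rw [Nat.totient_prime_pow_succ hp, Nat.totient_prime hp, Nat.add_sub_cancel]
  have hp0 : (p : ℝ) ≠ 0 := by exact_mod_cast hp.ne_zero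
  have hratio : 2 * ((p : ℝ) ^ j * ↑(p - 1)) / p ^ (j + 1) = 2 * ↑(p - 1) / p := by
    rw [pow_succ]
    field_simp
  push_cast
  rw [hratio, mul_assoc]
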